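/- arXiv:0904.4143 — 4 statements merged into one kernel-verified Lean document; each statement's English description precedes it below -/
import Mathlib

section
/- For every n ∈ ℕ and every x ∈ K∖O, the supremum defining T v_n(x) is attained at some a ∈ A(x); each value-iteration function v_n is Borel measurable with 0 ≤ v_n ≤ 1 on X and v_n ≤ v_{n+1} pointwise on X; and the pointwise limit v*(x) := lim_{n→∞} v_n(x) satisfies the Bellman equation: for every x ∈ X, v*(x) = 1_O(x) + 1_{K∖O}(x) · max_{a ∈ A(x)} ∫_X 1_K(y) v*(y) Q(dy|x,a), where the maximum over A(x) is attained. -/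
/-!
By the strong Feller property, for Borel `u` with `0 ≤ u ≤ 1` the map
`(x, a) ↦ ∫ 1_K u dQ(·|x,a)` is continuous on the graph `𝕂`. Its supremum over the compact fibre
`A(x)` is therefore attained, and (the upper half of Berge's maximum theorem: tube lemma plus
upper hemicontinuity) upper semicontinuous in `x ∈ K ∖ O`, hence Borel. So `T` maps Borel
`[0, 1]`-valued functions to such functions, and it is monotone; since `v₀ = 1_O ≤ T v₀`, the
sequence `vₙ` increases to some `v⋆`. For a fixed action the integrals converge by bounded
convergence, and an increasing limit commutes with the supremum over `A(x)`, so
`v_{n+1} = T vₙ → T v⋆`, which is the Bellman equation.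
-/

open MeasureTheory Set Filter Topology

/-- The dynamic programming operator:
`Tu(x) = 1_O(x) + 1_{K∖O}(x) ⬝ sup_{a ∈ A(x)} ∫ 1_K(y) u(y) Q(dy|x,a)`. -/
noncomputable def dpOp {X A : Type*} [MeasurableSpace X] (O K : Set X)
    (Amap : X → Set A) (Q : X → A → Measure X) (u : X → ℝ) : X → ℝ := fun x =>
  O.indicator (1 : X → ℝ) x +
    (K \ O).indicator
      (fun x' => sSup ((fun a => ∫ y, K.indicator u y ∂(Q x' a)) '' Amap x')) x


/-- The value-iteration functions: `v₀ = 1_O` and `v_{n+1} = T v_n`. -/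
noncomputable def viter {X A : Type*} [MeasurableSpace X] (O K : Set X)
    (Amap : X → Set A) (Q : X → A → Measure X) : ℕ → X → ℝ
  | 0 => O.indicator (1 : X → ℝ)
  | n + 1 => dpOp O K Amap Q (viter O K Amap Q n)

section Berge

variable {X A : Type*} [TopologicalSpace X] [TopologicalSpace A]
  {S : Set X} {Amap : X → Set A} {F : X × A → ℝ}

lemma ContinuousOn.sSup_image_fiber_mem
    (hF : ContinuousOn F {p : X × A | p.1 ∈ S ∧ p.2 ∈ Amap p.1})
    {x : X} (hx : x ∈ S) (hne : (Amap x).Nonempty) (hcp : IsCompact (Amap x)) :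
    sSup ((fun a => F (x, a)) '' Amap x) ∈ (fun a => F (x, a)) '' Amap x :=
  (hcp.image_of_continuousOn (hF.comp (by fun_prop) fun _ ha => ⟨hx, ha⟩)).sSup_mem
    (hne.image _)

lemma ContinuousOn.upperSemicontinuousOn_sSup_image
    (hF : ContinuousOn F {p : X × A | p.1 ∈ S ∧ p.2 ∈ Amap p.1})
    (hAne : ∀ x ∈ S, (Amap x).Nonempty) (hAcp : ∀ x ∈ S, IsCompact (Amap x))
    (hAuh : UpperHemicontinuousOn Amap S) :
    UpperSemicontinuousOn (fun x => sSup ((fun a => F (x, a)) '' Amap x)) S := by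
  intro x hx c hc
  obtain ⟨G, hGo, hG⟩ := continuousOn_iff'.mp hF (Iio c) isOpen_Iio
  have hbdd : BddAbove ((fun a => F (x, a)) '' Amap x) :=
    ((hAcp x hx).image_of_continuousOn (hF.comp (by fun_prop) fun _ ha => ⟨hx, ha⟩)).bddAbove
  have hfiber : {x} ×ˢ Amap x ⊆ G := by
    rintro ⟨z, a⟩ ⟨rfl : z = x, ha⟩
    have hlt : F (z, a) < c := (le_csSup hbdd ⟨a, ha, rfl⟩).trans_lt hc
    exact (hG.le ⟨hlt, hx, ha⟩).1
  -- the tube lemma and upper hemicontinuity give a neighbourhood on whose fibres `F < c`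
  obtain ⟨U, W, hUo, hWo, hxU, hAW, hUW⟩ :=
    generalized_tube_lemma isCompact_singleton (hAcp x hx) hGo hfiber
  filter_upwards [self_mem_nhdsWithin, nhdsWithin_le_nhds (hUo.mem_nhds (hxU rfl)),
    upperHemicontinuousOn_iff_forall_isOpen.mp hAuh x hx W hWo hAW] with z hzS hzU hzW
  obtain ⟨a, ha, hmax⟩ := hF.sSup_image_fiber_mem hzS (hAne z hzS) (hAcp z hzS)
  rw [← hmax]
  exact (hG.ge ⟨hUW ⟨hzU, hzW ha⟩, hzS, ha⟩).1

end Berge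

lemma UpperSemicontinuousOn.measurable_indicator {X : Type*} [TopologicalSpace X]
    [MeasurableSpace X] [OpensMeasurableSpace X] {S : Set X} {f : X → ℝ}
    (hf : UpperSemicontinuousOn f S) (hS : MeasurableSet S) : Measurable (S.indicator f) := by
  refine measurable_of_restrict_of_restrict_compl hS ?_ ?_
  · have : S.domRestrict (S.indicator f) = S.domRestrict f := by
      ext ⟨x, hx⟩; exact indicator_of_mem hx f
    exact this ▸ (upperSemicontinuousOn_iff_restrict.mpr hf).measurable
  · have : Sᶜ.domRestrict (S.indicator f) = 0 := by
      ext ⟨x, hx⟩; exact indicator_of_notMem hx f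
    exact this ▸ measurable_zero

lemma tendsto_sSup_image_of_monotone {ι : Type*} {s : Set ι} {f : ℕ → ι → ℝ} {g : ι → ℝ}
    (hs : s.Nonempty) (hg : BddAbove (g '' s)) (hf : ∀ a ∈ s, Monotone fun n => f n a)
    (hfg : ∀ a ∈ s, Tendsto (fun n => f n a) atTop (𝓝 (g a))) :
    Tendsto (fun n => sSup (f n '' s)) atTop (𝓝 (sSup (g '' s))) := by
  have hle : ∀ n, ∀ a ∈ s, f n a ≤ g a := fun n a ha => (hf a ha).ge_of_tendsto (hfg a ha) n
  have hbdd : ∀ n, BddAbove (f n '' s) := by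
    obtain ⟨b, hb⟩ := hg
    exact fun n => ⟨b, by rintro _ ⟨a, ha, rfl⟩; exact (hle n a ha).trans (hb ⟨a, ha, rfl⟩)⟩
  refine tendsto_atTop_isLUB (fun m n hmn => ?_) ⟨?_, fun b hb => ?_⟩
  · refine csSup_le (hs.image _) ?_
    rintro _ ⟨a, ha, rfl⟩
    exact (hf a ha hmn).trans (le_csSup (hbdd n) ⟨a, ha, rfl⟩)
  · rintro _ ⟨n, rfl⟩
    refine csSup_le (hs.image _) ?_
    rintro _ ⟨a, ha, rfl⟩
    exact (hle n a ha).trans (le_csSup hg ⟨a, ha, rfl⟩)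
  · refine csSup_le (hs.image _) ?_
    rintro _ ⟨a, ha, rfl⟩
    exact le_of_tendsto' (hfg a ha) fun n => (le_csSup (hbdd n) ⟨a, ha, rfl⟩).trans (hb ⟨n, rfl⟩)

lemma norm_indicator_le_one {X : Type*} {K : Set X} {u : X → ℝ} (h0 : 0 ≤ u) (h1 : u ≤ 1)
    (y : X) : ‖K.indicator u y‖ ≤ 1 := by
  by_cases hy : y ∈ K
  · rw [indicator_of_mem hy, Real.norm_of_nonneg (h0 y)]; exact h1 y
  · simp [indicator_of_notMem hy]

section DynamicProgramming

variable {X A : Type*} [MeasurableSpace X] {O K : Set X} {Amap : X → Set A}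
  {Q : X → A → Measure X} {u w : X → ℝ}

lemma integrable_indicator_of_le_one {μ : Measure X} [IsProbabilityMeasure μ]
    (hK : MeasurableSet K) (hu : Measurable u) (h0 : 0 ≤ u) (h1 : u ≤ 1) :
    Integrable (K.indicator u) μ :=
  .of_bound (hu.indicator hK).aestronglyMeasurable 1 (ae_of_all _ (norm_indicator_le_one h0 h1))

lemma integral_indicator_le_one {μ : Measure X} [IsProbabilityMeasure μ] (h0 : 0 ≤ u)
    (h1 : u ≤ 1) : ∫ y, K.indicator u y ∂μ ≤ 1 := by
  have hnorm := norm_integral_le_of_norm_le_const (μ := μ)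
    (ae_of_all _ (norm_indicator_le_one (K := K) h0 h1))
  exact (le_abs_self _).trans (by simpa using hnorm)

lemma integral_indicator_mono {μ : Measure X} [IsProbabilityMeasure μ] (hK : MeasurableSet K)
    (h0 : 0 ≤ u) (hw : Measurable w) (hw1 : w ≤ 1) (huw : u ≤ w) :
    ∫ y, K.indicator u y ∂μ ≤ ∫ y, K.indicator w y ∂μ :=
  integral_mono_of_nonneg (ae_of_all _ fun y => indicator_nonneg (fun y _ => h0 y) y)
    (integrable_indicator_of_le_one hK hw (h0.trans huw) hw1)
    (ae_of_all _ fun y => indicator_le_indicator' fun _ => huw y)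

lemma one_mem_upperBounds_integral_indicator
    (hQprob : ∀ x ∈ K \ O, ∀ a ∈ Amap x, IsProbabilityMeasure (Q x a))
    (h0 : 0 ≤ u) (h1 : u ≤ 1) {x : X} (hx : x ∈ K \ O) :
    1 ∈ upperBounds ((fun a => ∫ y, K.indicator u y ∂(Q x a)) '' Amap x) := by
  rintro _ ⟨a, ha, rfl⟩
  have := hQprob x hx a ha
  exact integral_indicator_le_one h0 h1

lemma indicator_one_le_dpOp (h0 : 0 ≤ u) : O.indicator 1 ≤ dpOp O K Amap Q u := fun x =>
  le_add_of_nonneg_right <| indicator_nonneg (fun x _ => Real.sSup_nonneg <| by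
    rintro _ ⟨a, -, rfl⟩; exact integral_nonneg fun y => indicator_nonneg (fun y _ => h0 y) y) x

lemma dpOp_le_one (hQprob : ∀ x ∈ K \ O, ∀ a ∈ Amap x, IsProbabilityMeasure (Q x a))
    (h0 : 0 ≤ u) (h1 : u ≤ 1) : dpOp O K Amap Q u ≤ 1 := by
  intro x
  by_cases hO : x ∈ O
  · simp [dpOp, hO]
  by_cases hx : x ∈ K \ O
  · simp only [dpOp, indicator_of_notMem hO, indicator_of_mem hx, zero_add, Pi.one_apply]
    exact Real.sSup_le (one_mem_upperBounds_integral_indicator hQprob h0 h1 hx) zero_le_one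
  · simp [dpOp, hO, hx]

lemma dpOp_mono (hmK : MeasurableSet K) (hAne : ∀ x ∈ K \ O, (Amap x).Nonempty)
    (hQprob : ∀ x ∈ K \ O, ∀ a ∈ Amap x, IsProbabilityMeasure (Q x a))
    (h0 : 0 ≤ u) (hw : Measurable w) (hw1 : w ≤ 1) (huw : u ≤ w) :
    dpOp O K Amap Q u ≤ dpOp O K Amap Q w := by
  intro x
  refine add_le_add le_rfl (indicator_le_indicator' fun hx => ?_)
  refine csSup_le ((hAne x hx).image _) ?_
  rintro _ ⟨a, ha, rfl⟩
  have := hQprob x hx a ha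
  exact le_csSup_of_le ⟨1, one_mem_upperBounds_integral_indicator hQprob (h0.trans huw) hw1 hx⟩
    ⟨a, ha, rfl⟩ (integral_indicator_mono hmK h0 hw hw1 huw)

lemma tendsto_dpOp (hmK : MeasurableSet K) (hAne : ∀ x ∈ K \ O, (Amap x).Nonempty)
    (hQprob : ∀ x ∈ K \ O, ∀ a ∈ Amap x, IsProbabilityMeasure (Q x a))
    {v : ℕ → X → ℝ} (hv : ∀ n, Measurable (v n)) (hv0 : ∀ n, 0 ≤ v n) (hv1 : ∀ n, v n ≤ 1)
    (hmono : Monotone v) (hlim : ∀ y, Tendsto (fun n => v n y) atTop (𝓝 (u y)))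
    (h0 : 0 ≤ u) (h1 : u ≤ 1) (x : X) :
    Tendsto (fun n => dpOp O K Amap Q (v n) x) atTop (𝓝 (dpOp O K Amap Q u x)) := by
  refine tendsto_const_nhds.add ?_
  by_cases hx : x ∈ K \ O
  · simp only [indicator_of_mem hx]
    refine tendsto_sSup_image_of_monotone (hAne x hx)
      ⟨1, one_mem_upperBounds_integral_indicator hQprob h0 h1 hx⟩
      (fun a ha m n hmn => ?_) (fun a ha => ?_)
    all_goals have := hQprob x hx a ha
    · exact integral_indicator_mono hmK (hv0 m) (hv n) (hv1 n) (hmono hmn)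
    refine tendsto_integral_of_dominated_convergence (fun _ => 1)
      (fun n => ((hv n).indicator hmK).aestronglyMeasurable) (integrable_const 1)
      (fun n => ae_of_all _ (norm_indicator_le_one (hv0 n) (hv1 n))) (ae_of_all _ fun y => ?_)
    by_cases hy : y ∈ K
    · simpa only [indicator_of_mem hy] using hlim y
    · simpa only [indicator_of_notMem hy] using tendsto_const_nhds
  · simpa only [indicator_of_notMem hx] using tendsto_const_nhds

lemma viter_nonneg (n : ℕ) : 0 ≤ viter O K Amap Q n := by
  induction n with
  | zero => exact indicator_nonneg (fun _ _ => zero_le_one)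
  | succ n ih => exact le_trans (indicator_nonneg fun _ _ => zero_le_one) (indicator_one_le_dpOp ih)

lemma viter_le_one (hQprob : ∀ x ∈ K \ O, ∀ a ∈ Amap x, IsProbabilityMeasure (Q x a))
    (n : ℕ) : viter O K Amap Q n ≤ 1 := by
  induction n with
  | zero => exact fun x => by by_cases hx : x ∈ O <;> simp [viter, hx]
  | succ n ih => exact dpOp_le_one hQprob (viter_nonneg n) ih

section Feller

variable [TopologicalSpace X] [TopologicalSpace A]

def StrongFellerOn (Q : X → A → Measure X) (s : Set (X × A)) : Prop :=
  ∀ g : X → ℝ, Measurable g → (∃ C, ∀ y, |g y| ≤ C) →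
    ContinuousOn (fun p : X × A => ∫ y, g y ∂(Q p.1 p.2)) s

lemma continuousOn_integral_indicator
    (hQfeller : StrongFellerOn Q {p : X × A | p.1 ∈ K \ O ∧ p.2 ∈ Amap p.1})
    (hmK : MeasurableSet K) (hu : Measurable u) (h0 : 0 ≤ u) (h1 : u ≤ 1) :
    ContinuousOn (fun p : X × A => ∫ y, K.indicator u y ∂(Q p.1 p.2))
      {p : X × A | p.1 ∈ K \ O ∧ p.2 ∈ Amap p.1} :=
  hQfeller _ (hu.indicator hmK) ⟨1, norm_indicator_le_one h0 h1⟩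

lemma exists_integral_indicator_eq_sSup
    (hQfeller : StrongFellerOn Q {p : X × A | p.1 ∈ K \ O ∧ p.2 ∈ Amap p.1})
    (hmK : MeasurableSet K)
    (hAne : ∀ x ∈ K \ O, (Amap x).Nonempty) (hAcp : ∀ x ∈ K \ O, IsCompact (Amap x))
    (hu : Measurable u) (h0 : 0 ≤ u) (h1 : u ≤ 1) {x : X} (hx : x ∈ K \ O) :
    ∃ a ∈ Amap x, ∫ y, K.indicator u y ∂(Q x a) =
      sSup ((fun a => ∫ y, K.indicator u y ∂(Q x a)) '' Amap x) :=
  (continuousOn_integral_indicator hQfeller hmK hu h0 h1).sSup_image_fiber_mem hx (hAne x hx)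
    (hAcp x hx)

lemma measurable_dpOp [OpensMeasurableSpace X]
    (hQfeller : StrongFellerOn Q {p : X × A | p.1 ∈ K \ O ∧ p.2 ∈ Amap p.1})
    (hmO : MeasurableSet O) (hmK : MeasurableSet K)
    (hAne : ∀ x ∈ K \ O, (Amap x).Nonempty) (hAcp : ∀ x ∈ K \ O, IsCompact (Amap x))
    (hAuh : UpperHemicontinuousOn Amap (K \ O))
    (hu : Measurable u) (h0 : 0 ≤ u) (h1 : u ≤ 1) : Measurable (dpOp O K Amap Q u) :=
  (measurable_one.indicator hmO).add
    (((continuousOn_integral_indicator hQfeller hmK hu h0 h1).upperSemicontinuousOn_sSup_image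
      hAne hAcp hAuh).measurable_indicator (hmK.diff hmO))

lemma measurable_viter [OpensMeasurableSpace X]
    (hQfeller : StrongFellerOn Q {p : X × A | p.1 ∈ K \ O ∧ p.2 ∈ Amap p.1})
    (hmO : MeasurableSet O) (hmK : MeasurableSet K)
    (hAne : ∀ x ∈ K \ O, (Amap x).Nonempty) (hAcp : ∀ x ∈ K \ O, IsCompact (Amap x))
    (hAuh : UpperHemicontinuousOn Amap (K \ O))
    (hQprob : ∀ x ∈ K \ O, ∀ a ∈ Amap x, IsProbabilityMeasure (Q x a)) (n : ℕ) :
    Measurable (viter O K Amap Q n) := by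
  induction n with
  | zero => exact measurable_one.indicator hmO
  | succ n ih =>
    exact measurable_dpOp hQfeller hmO hmK hAne hAcp hAuh ih (viter_nonneg n)
      (viter_le_one hQprob n)

lemma viter_le_viter_succ [OpensMeasurableSpace X]
    (hQfeller : StrongFellerOn Q {p : X × A | p.1 ∈ K \ O ∧ p.2 ∈ Amap p.1})
    (hmO : MeasurableSet O) (hmK : MeasurableSet K)
    (hAne : ∀ x ∈ K \ O, (Amap x).Nonempty) (hAcp : ∀ x ∈ K \ O, IsCompact (Amap x))
    (hAuh : UpperHemicontinuousOn Amap (K \ O))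
    (hQprob : ∀ x ∈ K \ O, ∀ a ∈ Amap x, IsProbabilityMeasure (Q x a)) (n : ℕ) :
    viter O K Amap Q n ≤ viter O K Amap Q (n + 1) := by
  induction n with
  | zero => exact indicator_one_le_dpOp (viter_nonneg 0)
  | succ n ih =>
    exact dpOp_mono hmK hAne hQprob (viter_nonneg n)
      (measurable_viter hQfeller hmO hmK hAne hAcp hAuh hQprob (n + 1))
      (viter_le_one hQprob (n + 1)) ih

end Feller

end DynamicProgramming

theorem stmt0_general {X A : Type*}
    [TopologicalSpace X] [MeasurableSpace X] [BorelSpace X]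
    [TopologicalSpace A]
    (O K : Set X)
    (hmO : MeasurableSet O) (hmK : MeasurableSet K)
    (Amap : X → Set A)
    (hAne : ∀ x ∈ K \ O, (Amap x).Nonempty)
    (hAcp : ∀ x ∈ K \ O, IsCompact (Amap x))
    -- upper hemicontinuity of `x ↦ A(x)` on `K ∖ O`
    (hAuh : ∀ x ∈ K \ O, ∀ U : Set A, IsOpen U → Amap x ⊆ U →
      ∃ V : Set X, IsOpen V ∧ x ∈ V ∧ ∀ z ∈ (K \ O) ∩ V, Amap z ⊆ U)
    (Q : X → A → Measure X)
    (hQprob : ∀ x ∈ K \ O, ∀ a ∈ Amap x, IsProbabilityMeasure (Q x a))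
    -- strong Feller property of `Q` on `𝕂`
    (hQfeller : ∀ g : X → ℝ, Measurable g → (∃ C, ∀ y, |g y| ≤ C) →
      ContinuousOn (fun p : X × A => ∫ y, g y ∂(Q p.1 p.2))
        {p : X × A | p.1 ∈ K \ O ∧ p.2 ∈ Amap p.1})
 :
    -- the supremum defining `T vₙ (x)` is attained for every `n` and `x ∈ K ∖ O`
    (∀ n : ℕ, ∀ x ∈ K \ O, ∃ a ∈ Amap x,
      (∫ y, K.indicator (viter O K Amap Q n) y ∂(Q x a)) =
        sSup ((fun a => ∫ y, K.indicator (viter O K Amap Q n) y ∂(Q x a)) '' Amap x)) ∧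
    (∀ n : ℕ, Measurable (viter O K Amap Q n)) ∧
    (∀ n : ℕ, ∀ x, 0 ≤ viter O K Amap Q n x) ∧
    (∀ n : ℕ, ∀ x, viter O K Amap Q n x ≤ 1) ∧
    (∀ n : ℕ, ∀ x, viter O K Amap Q n x ≤ viter O K Amap Q (n + 1) x) ∧
    -- the pointwise limit `v⋆` exists and satisfies the Bellman equation, with attained max
    (∃ vstar : X → ℝ,
      (∀ x, Filter.Tendsto (fun n => viter O K Amap Q n x) Filter.atTop (nhds (vstar x))) ∧
      (∀ x, vstar x = O.indicator (1 : X → ℝ) x +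
        (K \ O).indicator
          (fun x' => sSup ((fun a => ∫ y, K.indicator vstar y ∂(Q x' a)) '' Amap x')) x) ∧
      (∀ x ∈ K \ O, ∃ a ∈ Amap x,
        (∫ y, K.indicator vstar y ∂(Q x a)) =
          sSup ((fun a => ∫ y, K.indicator vstar y ∂(Q x a)) '' Amap x))) := by
  have hAuh' : UpperHemicontinuousOn Amap (K \ O) :=
    upperHemicontinuousOn_iff_forall_isOpen.mpr fun x hx U hU hxU =>
      let ⟨V, hVo, hxV, hV⟩ := hAuh x hx U hU hxU
      mem_nhdsWithin.mpr ⟨V, hVo, hxV, fun z hz => hV z ⟨hz.2, hz.1⟩⟩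
  have hmeas := measurable_viter hQfeller hmO hmK hAne hAcp hAuh' hQprob
  have hle1 := viter_le_one hQprob
  have hmono : Monotone (viter O K Amap Q) :=
    monotone_nat_of_le_succ (viter_le_viter_succ hQfeller hmO hmK hAne hAcp hAuh' hQprob)
  set vstar : X → ℝ := fun x => ⨆ n, viter O K Amap Q n x
  have hlim : ∀ x, Tendsto (fun n => viter O K Amap Q n x) atTop (𝓝 (vstar x)) := fun x =>
    tendsto_atTop_ciSup (fun m n hmn => hmono hmn x) ⟨1, by rintro _ ⟨n, rfl⟩; exact hle1 n x⟩
  have hvstar : Measurable vstar := measurable_of_tendsto_metrizable hmeas (tendsto_pi_nhds.2 hlim)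
  have hvstar0 : 0 ≤ vstar := fun x => ge_of_tendsto' (hlim x) fun n => viter_nonneg n x
  have hvstar1 : vstar ≤ 1 := fun x => le_of_tendsto' (hlim x) fun n => hle1 n x
  -- `v_{n+1} = T v_n` converges both to `v⋆` and to `T v⋆`
  have hbellman x : vstar x = dpOp O K Amap Q vstar x :=
    tendsto_nhds_unique ((hlim x).comp (tendsto_add_atTop_nat 1))
      (tendsto_dpOp hmK hAne hQprob hmeas viter_nonneg hle1 hmono hlim hvstar0 hvstar1 x)
  exact ⟨fun n x => exists_integral_indicator_eq_sSup hQfeller hmK hAne hAcp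
      (hmeas n) (viter_nonneg n) (hle1 n), hmeas, viter_nonneg, hle1, fun n => hmono n.le_succ,
    vstar, hlim, hbellman, fun x => exists_integral_indicator_eq_sSup hQfeller hmK hAne hAcp
      hvstar hvstar0 hvstar1⟩

theorem stmt0 {X A : Type*}
    [TopologicalSpace X] [PolishSpace X] [MeasurableSpace X] [BorelSpace X]
    [TopologicalSpace A] [PolishSpace A] [MeasurableSpace A] [BorelSpace A]
    (O K : Set X) (hOne : O.Nonempty) (hKne : K.Nonempty)
    (hmO : MeasurableSet O) (hmK : MeasurableSet K) (hOK : O ⊂ K)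
    (Amap : X → Set A)
    (hAne : ∀ x ∈ K \ O, (Amap x).Nonempty)
    (hAcp : ∀ x ∈ K \ O, IsCompact (Amap x))
    -- upper hemicontinuity of `x ↦ A(x)` on `K ∖ O`
    (hAuh : ∀ x ∈ K \ O, ∀ U : Set A, IsOpen U → Amap x ⊆ U →
      ∃ V : Set X, IsOpen V ∧ x ∈ V ∧ ∀ z ∈ (K \ O) ∩ V, Amap z ⊆ U)
    -- weak measurability of `x ↦ A(x)` on `K ∖ O`
    (hAwm : ∀ G : Set A, IsOpen G → MeasurableSet {x | x ∈ K \ O ∧ (Amap x ∩ G).Nonempty})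
    (Q : X → A → Measure X)
    (hQprob : ∀ x ∈ K \ O, ∀ a ∈ Amap x, IsProbabilityMeasure (Q x a))
    (hQmeas : ∀ B : Set X, MeasurableSet B →
      Measurable fun p : {p : X × A // p.1 ∈ K \ O ∧ p.2 ∈ Amap p.1} => Q p.1.1 p.1.2 B)
    -- strong Feller property of `Q` on `𝕂`
    (hQfeller : ∀ g : X → ℝ, Measurable g → (∃ C, ∀ y, |g y| ≤ C) →
      ContinuousOn (fun p : X × A => ∫ y, g y ∂(Q p.1 p.2))
        {p : X × A | p.1 ∈ K \ O ∧ p.2 ∈ Amap p.1})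
 :
    -- the supremum defining `T vₙ (x)` is attained for every `n` and `x ∈ K ∖ O`
    (∀ n : ℕ, ∀ x ∈ K \ O, ∃ a ∈ Amap x,
      (∫ y, K.indicator (viter O K Amap Q n) y ∂(Q x a)) =
        sSup ((fun a => ∫ y, K.indicator (viter O K Amap Q n) y ∂(Q x a)) '' Amap x)) ∧
    (∀ n : ℕ, Measurable (viter O K Amap Q n)) ∧
    (∀ n : ℕ, ∀ x, 0 ≤ viter O K Amap Q n x) ∧
    (∀ n : ℕ, ∀ x, viter O K Amap Q n x ≤ 1) ∧
    (∀ n : ℕ, ∀ x, viter O K Amap Q n x ≤ viter O K Amap Q (n + 1) x) ∧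
    -- the pointwise limit `v⋆` exists and satisfies the Bellman equation, with attained max
    (∃ vstar : X → ℝ,
      (∀ x, Filter.Tendsto (fun n => viter O K Amap Q n x) Filter.atTop (nhds (vstar x))) ∧
      (∀ x, vstar x = O.indicator (1 : X → ℝ) x +
        (K \ O).indicator
          (fun x' => sSup ((fun a => ∫ y, K.indicator vstar y ∂(Q x' a)) '' Amap x')) x) ∧
      (∀ x ∈ K \ O, ∃ a ∈ Amap x,
        (∫ y, K.indicator vstar y ∂(Q x a)) =
          sSup ((fun a => ∫ y, K.indicator vstar y ∂(Q x a)) '' Amap x))) :=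
  stmt0_general O K hmO hmK Amap hAne hAcp hAuh Q hQprob hQfeller
end

section
/- For every Borel measurable u: X→[0,1] with u = 0 on X∖K, the function Tu is Borel measurable, satisfies 0 ≤ Tu ≤ 1 on X and Tu = 0 on X∖K, the supremum defining Tu(x) is attained for each x ∈ K∖O, and there exists a Borel measurable selector f: K∖O → A with f(x) ∈ A(x) for all x ∈ K∖O such that Tu(x) = ∫_X 1_K(y) u(y) Q(dy|x, f(x)) for every x ∈ K∖O. -/
/-!
For `x ∈ K ∖ O` the objective `w(x, a) = ∫ 1_K u dQ(·|x,a)` is continuous on the compact set `A(x)`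
by the strong Feller property, so the supremum `v(x)` in `Tu(x)` is a maximum. Measurability of `v`
and of a maximizer is a measurable maximum theorem: `{x | c < v(x)}` is the projection of the
relatively open set `{(x,a) ∈ 𝕂 | c < w(x,a)}`, which is cut out of `𝕂` by a countable union of
open rectangles, and weak measurability makes the projection of each rectangle Borel. The argmax
map has closed values and, by compactness, for closed `C`
`{x | argmax(x) ∩ C ≠ ∅} = ⋂ₙ {x | ∃ a ∈ A(x), d(a, C) < 1/n ∧ v(x) - 1/n < w(x,a)}`,
so the Kuratowski–Ryll-Nardzewski theorem yields a Borel maximizer.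
-/

open MeasureTheory Set Filter Topology

open Metric

section MeasurableSelection

variable {S A : Type*} [MeasurableSpace S]

theorem measurableSet_setOf_apply_comp {ι : Type*} [Countable ι] [MeasurableSpace ι]
    [MeasurableSingletonClass ι] {P : ι → S → Prop} (hP : ∀ i, MeasurableSet {s | P i s})
    {g : S → ι} (hg : Measurable g) : MeasurableSet {s | P (g s) s} :=
  measurableSet_setOfPred.2 <|
    (measurable_from_prod_countable_left (f := fun p : S × ι => P p.2 p.1)
      fun i => measurableSet_setOfPred.1 (hP i)).comp (measurable_id.prodMk hg)

theorem exists_measurable_nat_inter_closedBall_nonempty [PseudoMetricSpace A] {u : ℕ → A}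
    (hu : DenseRange u) {T : S → Set A}
    (hT : ∀ C, IsClosed C → MeasurableSet {s | (T s ∩ C).Nonempty})
    (hne : ∀ s, (T s).Nonempty) {r : ℝ} (hr : 0 < r) :
    ∃ g : S → ℕ, Measurable g ∧ ∀ s, (T s ∩ closedBall (u (g s)) r).Nonempty := by
  classical
  have h : ∀ s, ∃ n, (T s ∩ closedBall (u n) r).Nonempty := fun s => by
    obtain ⟨c, hc⟩ := hne s
    obtain ⟨n, hn⟩ := denseRange_iff.1 hu c r hr
    exact ⟨n, c, hc, mem_closedBall.2 hn.le⟩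
  exact ⟨fun s => Nat.find (h s), measurable_find h fun n => hT _ isClosed_closedBall,
    fun s => Nat.find_spec (h s)⟩

theorem exists_measurable_nat_seq_inter_closedBall_nonempty [PseudoMetricSpace A] {u : ℕ → A}
    (hu : DenseRange u) {M : S → Set A} (hne : ∀ s, (M s).Nonempty)
    (hM : ∀ C, IsClosed C → MeasurableSet {s | (M s ∩ C).Nonempty}) {r : ℕ → ℝ}
    (hr : ∀ k, 0 < r k) :
    ∃ G : ℕ → S → ℕ, (∀ k, Measurable (G k)) ∧ ∀ k s,
      (M s ∩ closedBall (u (G k s)) (r k) ∩ closedBall (u (G (k + 1) s)) (r (k + 1))).Nonempty := by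
  let Good (k : ℕ) (g : S → ℕ) : Prop :=
    Measurable g ∧ ∀ s, (M s ∩ closedBall (u (g s)) (r k)).Nonempty
  -- stated for every `g`, so that `choose` yields a step function to iterate
  have step : ∀ k g, ∃ g' : S → ℕ, Good k g → Good (k + 1) g' ∧
      ∀ s, (M s ∩ closedBall (u (g s)) (r k) ∩ closedBall (u (g' s)) (r (k + 1))).Nonempty := by
    intro k g
    by_cases hg : Good k g
    · have hT : ∀ C, IsClosed C →
          MeasurableSet {s | (M s ∩ closedBall (u (g s)) (r k) ∩ C).Nonempty} := fun C hC =>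
        measurableSet_setOf_apply_comp (P := fun n s => (M s ∩ closedBall (u n) (r k) ∩ C).Nonempty)
          (fun n => by simpa only [inter_assoc] using hM _ (isClosed_closedBall.inter hC)) hg.1
      obtain ⟨g', hg'm, hg'⟩ :=
        exists_measurable_nat_inter_closedBall_nonempty hu hT hg.2 (hr (k + 1))
      exact ⟨g', fun _ => ⟨⟨hg'm, fun s => (hg' s).mono fun a ha => ⟨ha.1.1, ha.2⟩⟩, hg'⟩⟩
    · exact ⟨g, fun h => absurd h hg⟩
  choose next hnext using step
  obtain ⟨g₀, hg₀⟩ := exists_measurable_nat_inter_closedBall_nonempty hu hM hne (hr 0)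
  let G : ℕ → S → ℕ := fun k => Nat.rec g₀ next k
  have hG : ∀ k, Good k (G k) := fun k => by
    induction k with
    | zero => exact hg₀
    | succ k ih => exact (hnext k (G k) ih).1
  exact ⟨G, fun k => (hG k).1, fun k => (hnext k (G k) (hG k)).2⟩

/-- The Kuratowski–Ryll-Nardzewski measurable selection theorem. -/
theorem exists_measurable_selection [TopologicalSpace A] [PolishSpace A] [MeasurableSpace A]
    [BorelSpace A] {M : S → Set A} (hne : ∀ s, (M s).Nonempty) (hcl : ∀ s, IsClosed (M s))
    (hM : ∀ C, IsClosed C → MeasurableSet {s | (M s ∩ C).Nonempty}) :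
    ∃ f : S → A, Measurable f ∧ ∀ s, f s ∈ M s := by
  rcases isEmpty_or_nonempty S with hS | ⟨⟨s₀⟩⟩
  · exact ⟨isEmptyElim, Subsingleton.measurable, isEmptyElim⟩
  have : Nonempty A := ⟨(hne s₀).some⟩
  let := TopologicalSpace.upgradeIsCompletelyMetrizable A
  obtain ⟨u, hu⟩ := TopologicalSpace.exists_dense_seq A
  set r : ℕ → ℝ := fun k => (1 / 2) ^ k
  obtain ⟨G, hGm, hG⟩ := exists_measurable_nat_seq_inter_closedBall_nonempty hu hne hM
    (r := r) fun k => pow_pos (by norm_num) k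
  set x : ℕ → S → A := fun k s => u (G k s)
  have hdist : ∀ k s, dist (x k s) (x (k + 1) s) ≤ 3 / 2 * (1 / 2) ^ k := fun k s => by
    obtain ⟨c, ⟨-, hc⟩, hc'⟩ := hG k s
    calc dist (x k s) (x (k + 1) s) ≤ dist c (x k s) + dist c (x (k + 1) s) :=
          dist_triangle_left _ _ _
      _ ≤ r k + r (k + 1) := add_le_add hc hc'
      _ = 3 / 2 * (1 / 2) ^ k := by ring
  choose f hf using fun s =>
    cauchySeq_tendsto_of_complete (cauchySeq_of_le_geometric _ _ (by norm_num) (hdist · s))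
  refine ⟨f, measurable_of_tendsto_metrizable (fun k => measurable_from_nat.comp (hGm k))
    (tendsto_pi_nhds.2 hf), fun s => ?_⟩
  have hinf : ∀ k, infDist (x k s) (M s) ≤ r k := fun k => by
    obtain ⟨c, ⟨hcM, hc⟩, -⟩ := hG k s
    exact (infDist_le_dist_of_mem hcM).trans (by rwa [dist_comm, ← mem_closedBall])
  refine ((hcl s).mem_iff_infDist_zero (hne s)).2 (le_antisymm ?_ infDist_nonneg)
  exact le_of_tendsto_of_tendsto' (((continuous_infDist_pt _).tendsto _).comp (hf s))
    (tendsto_pow_atTop_nhds_zero_of_lt_one (by norm_num) (by norm_num)) hinf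

end MeasurableSelection

theorem IsCompact.exists_mem_le_of_forall_thickening {A : Type*} [PseudoMetricSpace A]
    {K C : Set A} (hK : IsCompact K) (hC : IsClosed C) {g : A → ℝ} (hg : ContinuousOn g K)
    {m : ℝ} {δ : ℕ → ℝ} (hδ : Tendsto δ atTop (𝓝 0))
    (h : ∀ n, ∃ a ∈ K, a ∈ thickening (δ n) C ∧ m - δ n < g a) :
    ∃ a ∈ K, a ∈ C ∧ m ≤ g a := by
  rcases C.eq_empty_or_nonempty with rfl | hCne
  · obtain ⟨_, -, ha, -⟩ := h 0
    simp at ha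
  choose p hpK hpC hpg using h
  obtain ⟨a, haK, φ, hφ, hpa⟩ := hK.tendsto_subseq hpK
  have hδφ : Tendsto (δ ∘ φ) atTop (𝓝 0) := hδ.comp hφ.tendsto_atTop
  refine ⟨a, haK, ?_, ?_⟩
  · have hinf : Tendsto (fun n => infDist (p (φ n)) C) atTop (𝓝 (infDist a C)) :=
      ((continuous_infDist_pt C).tendsto a).comp hpa
    refine (hC.mem_iff_infDist_zero hCne).2 (le_antisymm ?_ infDist_nonneg)
    exact le_of_tendsto_of_tendsto' hinf hδφ fun n =>
      ((mem_thickening_iff_infDist_lt hCne).1 (hpC (φ n))).le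
  · have hgp : Tendsto (fun n => g (p (φ n))) atTop (𝓝 (g a)) :=
      (hg a haK).tendsto.comp (tendsto_nhdsWithin_iff.2 ⟨hpa, .of_forall fun n => hpK (φ n)⟩)
    have hm : Tendsto (fun n => m - δ (φ n)) atTop (𝓝 m) := by
      simpa using tendsto_const_nhds.sub hδφ
    exact le_of_tendsto_of_tendsto' hm hgp fun n => (hpg (φ n)).le

section ValueFunction

variable {X A : Type*} {D : Set X} {Φ : X → Set A} {w : X × A → ℝ}

def admissiblePairs (D : Set X) (Φ : X → Set A) : Set (X × A) :=
  {p | p.1 ∈ D ∧ p.2 ∈ Φ p.1}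

noncomputable def valueFun (Φ : X → Set A) (w : X × A → ℝ) (x : X) : ℝ :=
  sSup ((fun a => w (x, a)) '' Φ x)

def argmaxSet (Φ : X → Set A) (w : X × A → ℝ) (x : X) : Set A :=
  {a | a ∈ Φ x ∧ w (x, a) = valueFun Φ w x}

variable [TopologicalSpace X] [TopologicalSpace A]

theorem ContinuousOn.slice_of_admissiblePairs (hw : ContinuousOn w (admissiblePairs D Φ))
    {x : X} (hx : x ∈ D) : ContinuousOn (fun a => w (x, a)) (Φ x) :=
  hw.comp (Continuous.continuousOn (by fun_prop)) fun _ ha => ⟨hx, ha⟩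

theorem exists_mem_eq_valueFun (hw : ContinuousOn w (admissiblePairs D Φ)) {x : X}
    (hx : x ∈ D) (hcpt : IsCompact (Φ x)) (hne : (Φ x).Nonempty) :
    ∃ a ∈ Φ x, w (x, a) = valueFun Φ w x :=
  (hcpt.image_of_continuousOn (hw.slice_of_admissiblePairs hx)).sSup_mem (hne.image _)

theorem le_valueFun (hw : ContinuousOn w (admissiblePairs D Φ)) {x : X} (hx : x ∈ D)
    (hcpt : IsCompact (Φ x)) {a : A} (ha : a ∈ Φ x) : w (x, a) ≤ valueFun Φ w x :=
  le_csSup (hcpt.image_of_continuousOn (hw.slice_of_admissiblePairs hx)).bddAbove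
    (mem_image_of_mem _ ha)

theorem lt_valueFun_iff (hw : ContinuousOn w (admissiblePairs D Φ)) {x : X} (hx : x ∈ D)
    (hcpt : IsCompact (Φ x)) (hne : (Φ x).Nonempty) {c : ℝ} :
    c < valueFun Φ w x ↔ ∃ a ∈ Φ x, c < w (x, a) := by
  constructor
  · obtain ⟨a, ha, hav⟩ := exists_mem_eq_valueFun hw hx hcpt hne
    exact fun hc => ⟨a, ha, hav ▸ hc⟩
  · rintro ⟨a, ha, hc⟩
    exact hc.trans_le (le_valueFun hw hx hcpt ha)

end ValueFunction

section MeasurableMaximum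

variable {X A : Type*} [TopologicalSpace X] [MeasurableSpace X] [OpensMeasurableSpace X]
  [SecondCountableTopology X] {D : Set X} {Φ : X → Set A} {w : X × A → ℝ}

section OpenSets

variable [TopologicalSpace A] [SecondCountableTopology A]

theorem measurableSet_exists_mem_of_isOpen
    (hΦ : ∀ G : Set A, IsOpen G → MeasurableSet {x | x ∈ D ∧ (Φ x ∩ G).Nonempty})
    {U : Set (X × A)} (hU : IsOpen U) :
    MeasurableSet {x | x ∈ D ∧ ∃ a ∈ Φ x, (x, a) ∈ U} := by
  obtain ⟨bX, hbXc, -, hbX⟩ := TopologicalSpace.exists_countable_basis X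
  obtain ⟨bA, hbAc, -, hbA⟩ := TopologicalSpace.exists_countable_basis A
  set I : Set (Set X × Set A) := {q | q.1 ∈ bX ∧ q.2 ∈ bA ∧ q.1 ×ˢ q.2 ⊆ U}
  have hIc : I.Countable :=
    (hbXc.prod hbAc).mono fun q hq => show q ∈ bX ×ˢ bA from ⟨hq.1, hq.2.1⟩
  have heq : {x | x ∈ D ∧ ∃ a ∈ Φ x, (x, a) ∈ U} =
      ⋃ q ∈ I, {x | x ∈ D ∧ (Φ x ∩ q.2).Nonempty} ∩ q.1 := by
    ext x
    simp only [mem_ofPred_eq, mem_iUnion, mem_inter_iff, exists_prop]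
    constructor
    · rintro ⟨hxD, a, haΦ, haU⟩
      obtain ⟨_, ⟨V, hV, G, hG, rfl⟩, hxa, hVG⟩ := (hbX.prod hbA).exists_subset_of_mem_open haU hU
      exact ⟨(V, G), ⟨hV, hG, hVG⟩, ⟨hxD, a, haΦ, hxa.2⟩, hxa.1⟩
    · rintro ⟨⟨V, G⟩, ⟨-, -, hVG⟩, ⟨hxD, a, haΦ, haG⟩, hxV⟩
      exact ⟨hxD, a, haΦ, hVG ⟨hxV, haG⟩⟩
  rw [heq]
  exact .biUnion hIc fun q hq => (hΦ q.2 (hbA.isOpen hq.2.1)).inter (hbX.isOpen hq.1).measurableSet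

theorem measurableSet_exists_mem_lt
    (hΦ : ∀ G : Set A, IsOpen G → MeasurableSet {x | x ∈ D ∧ (Φ x ∩ G).Nonempty})
    (hw : ContinuousOn w (admissiblePairs D Φ)) {G : Set A} (hG : IsOpen G) (c : ℝ) :
    MeasurableSet {x | x ∈ D ∧ ∃ a ∈ Φ x, a ∈ G ∧ c < w (x, a)} := by
  obtain ⟨U, hU, hUw⟩ := _root_.continuousOn_iff'.1 hw (Ioi c) isOpen_Ioi
  convert measurableSet_exists_mem_of_isOpen hΦ (hU.inter (isOpen_univ.prod hG)) using 1
  ext x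
  simp only [mem_ofPred_eq]
  refine and_congr_right fun hx => exists_congr fun a => and_congr_right fun ha => ?_
  have hxa := Set.ext_iff.1 hUw (x, a)
  simp only [admissiblePairs, mem_inter_iff, mem_preimage, mem_Ioi, mem_ofPred_eq, mem_prod,
    mem_univ, true_and] at hxa ⊢
  tauto

theorem measurableSet_exists_mem_lt_of_measurable
    (hΦ : ∀ G : Set A, IsOpen G → MeasurableSet {x | x ∈ D ∧ (Φ x ∩ G).Nonempty})
    (hw : ContinuousOn w (admissiblePairs D Φ)) {G : Set A} (hG : IsOpen G)
    {h : D → ℝ} (hh : Measurable h) :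
    MeasurableSet {x : D | ∃ a ∈ Φ x, a ∈ G ∧ h x < w (x, a)} := by
  have heq : {x : D | ∃ a ∈ Φ x, a ∈ G ∧ h x < w (x, a)} = ⋃ q : ℚ,
      {x : D | h x < q} ∩ Subtype.val ⁻¹' {x | x ∈ D ∧ ∃ a ∈ Φ x, a ∈ G ∧ (q : ℝ) < w (x, a)} := by
    ext x
    simp only [mem_ofPred_eq, mem_iUnion, mem_inter_iff, mem_preimage]
    constructor
    · rintro ⟨a, ha, haG, hlt⟩
      obtain ⟨q, hhq, hqw⟩ := exists_rat_btwn hlt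
      exact ⟨q, hhq, x.2, a, ha, haG, hqw⟩
    · rintro ⟨q, hhq, -, a, ha, haG, hqw⟩
      exact ⟨a, ha, haG, hhq.trans hqw⟩
  rw [heq]
  exact .iUnion fun q => (measurableSet_lt hh measurable_const).inter
    (measurable_subtype_coe (measurableSet_exists_mem_lt hΦ hw hG q))

theorem measurable_valueFun
    (hΦ : ∀ G : Set A, IsOpen G → MeasurableSet {x | x ∈ D ∧ (Φ x ∩ G).Nonempty})
    (hw : ContinuousOn w (admissiblePairs D Φ)) (hcpt : ∀ x ∈ D, IsCompact (Φ x))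
    (hne : ∀ x ∈ D, (Φ x).Nonempty) : Measurable fun x : D => valueFun Φ w x := by
  refine measurable_of_Ioi fun c => ?_
  convert measurableSet_exists_mem_lt_of_measurable hΦ hw isOpen_univ (measurable_const (a := c))
    using 1
  ext x
  simp [lt_valueFun_iff hw x.2 (hcpt x x.2) (hne x x.2)]

end OpenSets

theorem measurableSet_argmaxSet_inter_nonempty [PseudoMetricSpace A] [SecondCountableTopology A]
    (hΦ : ∀ G : Set A, IsOpen G → MeasurableSet {x | x ∈ D ∧ (Φ x ∩ G).Nonempty})
    (hw : ContinuousOn w (admissiblePairs D Φ)) (hcpt : ∀ x ∈ D, IsCompact (Φ x))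
    (hne : ∀ x ∈ D, (Φ x).Nonempty) {C : Set A} (hC : IsClosed C) :
    MeasurableSet {x : D | (argmaxSet Φ w x ∩ C).Nonempty} := by
  set δ : ℕ → ℝ := fun n => 1 / (n + 1)
  have heq : {x : D | (argmaxSet Φ w x ∩ C).Nonempty} = ⋂ n, {x : D | ∃ a ∈ Φ x,
      a ∈ thickening (δ n) C ∧ valueFun Φ w x - δ n < w (x, a)} := by
    ext x
    simp only [mem_ofPred_eq, mem_iInter]
    constructor
    · rintro ⟨a, ⟨ha, hav⟩, haC⟩ n
      exact ⟨a, ha, self_subset_thickening (by positivity) C haC,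
        hav ▸ sub_lt_self _ (by positivity)⟩
    · intro h
      obtain ⟨a, ha, haC, hle⟩ := (hcpt x x.2).exists_mem_le_of_forall_thickening hC
        (hw.slice_of_admissiblePairs x.2) tendsto_one_div_add_atTop_nhds_zero_nat h
      exact ⟨a, ⟨ha, (le_valueFun hw x.2 (hcpt x x.2) ha).antisymm hle⟩, haC⟩
  rw [heq]
  exact .iInter fun n => measurableSet_exists_mem_lt_of_measurable hΦ hw isOpen_thickening
    ((measurable_valueFun hΦ hw hcpt hne).sub_const _)

/-- The measurable maximum theorem. -/
theorem exists_measurable_argmax [TopologicalSpace A] [PolishSpace A] [MeasurableSpace A]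
    [BorelSpace A]
    (hΦ : ∀ G : Set A, IsOpen G → MeasurableSet {x | x ∈ D ∧ (Φ x ∩ G).Nonempty})
    (hw : ContinuousOn w (admissiblePairs D Φ)) (hcpt : ∀ x ∈ D, IsCompact (Φ x))
    (hne : ∀ x ∈ D, (Φ x).Nonempty) :
    ∃ f : D → A, Measurable f ∧ ∀ x : D, f x ∈ argmaxSet Φ w x := by
  let := TopologicalSpace.upgradeIsCompletelyMetrizable A
  exact exists_measurable_selection
    (fun x => exists_mem_eq_valueFun hw x.2 (hcpt x x.2) (hne x x.2))
    (fun x => (hw.slice_of_admissiblePairs x.2).preimage_isClosed_of_isClosed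
      (hcpt x x.2).isClosed isClosed_singleton)
    fun C hC => measurableSet_argmaxSet_inter_nonempty hΦ hw hcpt hne hC

end MeasurableMaximum

theorem Measurable.indicator_of_subtype {α β : Type*} [MeasurableSpace α] [MeasurableSpace β]
    [Zero β] {s : Set α} {f : α → β} (hf : Measurable fun x : s => f x) (hs : MeasurableSet s) :
    Measurable (s.indicator f) := by
  have h₁ : s.domRestrict (s.indicator f) = fun x : s => f x :=
    funext fun x => indicator_of_mem x.2 f
  have h₂ : sᶜ.domRestrict (s.indicator f) = fun _ => 0 :=
    funext fun x => indicator_of_notMem x.2 f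
  exact measurable_of_restrict_of_restrict_compl hs (h₁ ▸ hf) (h₂ ▸ measurable_const)

theorem integral_mem_Icc_zero_one {X : Type*} [MeasurableSpace X] {μ : Measure X}
    [IsProbabilityMeasure μ] {g : X → ℝ} (hg : ∀ y, g y ∈ Icc 0 1) : ∫ y, g y ∂μ ∈ Icc 0 1 := by
  have hnorm : ∀ y, ‖g y‖ ≤ 1 := fun y => by
    rw [Real.norm_eq_abs, abs_le]
    exact ⟨by linarith [(hg y).1], (hg y).2⟩
  refine ⟨integral_nonneg fun y => (hg y).1, (le_abs_self _).trans ?_⟩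
  simpa [Real.norm_eq_abs] using norm_integral_le_of_norm_le_const (μ := μ) (.of_forall hnorm)

section DynamicProgramming

variable {X A : Type*} [MeasurableSpace X] {O K : Set X} {Amap : X → Set A}
  {Q : X → A → Measure X} {u : X → ℝ}

theorem dpOp_eq : dpOp O K Amap Q u =
    O.indicator 1 + (K \ O).indicator (valueFun Amap fun p => ∫ y, K.indicator u y ∂(Q p.1 p.2)) :=
  rfl

theorem dpOp_apply_of_mem_diff {x : X} (hx : x ∈ K \ O) :
    dpOp O K Amap Q u x = valueFun Amap (fun p => ∫ y, K.indicator u y ∂(Q p.1 p.2)) x := by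
  simp [dpOp_eq, indicator_of_mem hx, indicator_of_notMem hx.2]

theorem dpOp_apply_of_notMem_of_notMem {x : X} (hxO : x ∉ O) (hxK : x ∉ K) :
    dpOp O K Amap Q u x = 0 := by
  have hxKO : x ∉ K \ O := mt And.left hxK
  rw [dpOp_eq, Pi.add_apply, indicator_of_notMem hxO, indicator_of_notMem hxKO, add_zero]

theorem dpOp_mem_Icc
    (hv : ∀ x ∈ K \ O, valueFun Amap (fun p => ∫ y, K.indicator u y ∂(Q p.1 p.2)) x ∈ Icc 0 1)
    (x : X) : dpOp O K Amap Q u x ∈ Icc 0 1 := by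
  by_cases hxO : x ∈ O
  · rw [dpOp_eq, Pi.add_apply, indicator_of_mem hxO, indicator_of_notMem (notMem_sdiff_of_mem hxO)]
    simp
  by_cases hxK : x ∈ K
  · exact dpOp_apply_of_mem_diff ⟨hxK, hxO⟩ ▸ hv x ⟨hxK, hxO⟩
  · simp [dpOp_apply_of_notMem_of_notMem hxO hxK]

end DynamicProgramming

theorem stmt1_general {X A : Type*}
    [TopologicalSpace X] [PolishSpace X] [MeasurableSpace X] [BorelSpace X]
    [TopologicalSpace A] [PolishSpace A] [MeasurableSpace A] [BorelSpace A]
    (O K : Set X)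
    (hmO : MeasurableSet O) (hmK : MeasurableSet K) (hOK : O ⊂ K)
    (Amap : X → Set A)
    (hAne : ∀ x ∈ K \ O, (Amap x).Nonempty)
    (hAcp : ∀ x ∈ K \ O, IsCompact (Amap x))
    -- weak measurability of `x ↦ A(x)` on `K ∖ O`
    (hAwm : ∀ G : Set A, IsOpen G → MeasurableSet {x | x ∈ K \ O ∧ (Amap x ∩ G).Nonempty})
    (Q : X → A → Measure X)
    (hQprob : ∀ x ∈ K \ O, ∀ a ∈ Amap x, IsProbabilityMeasure (Q x a))
    -- strong Feller property of `Q` on `𝕂`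
    (hQfeller : ∀ g : X → ℝ, Measurable g → (∃ C, ∀ y, |g y| ≤ C) →
      ContinuousOn (fun p : X × A => ∫ y, g y ∂(Q p.1 p.2))
        {p : X × A | p.1 ∈ K \ O ∧ p.2 ∈ Amap p.1})
    (u : X → ℝ) (humeas : Measurable u) (hu0 : ∀ x, 0 ≤ u x) (hu1 : ∀ x, u x ≤ 1) :
    Measurable (dpOp O K Amap Q u) ∧
    (∀ x, 0 ≤ dpOp O K Amap Q u x) ∧ (∀ x, dpOp O K Amap Q u x ≤ 1) ∧
    (∀ x ∉ K, dpOp O K Amap Q u x = 0) ∧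
    (∀ x ∈ K \ O, ∃ a ∈ Amap x,
      (∫ y, K.indicator u y ∂(Q x a)) =
        sSup ((fun a => ∫ y, K.indicator u y ∂(Q x a)) '' Amap x)) ∧
    (∃ f : {x : X // x ∈ K \ O} → A, Measurable f ∧
      (∀ x : {x : X // x ∈ K \ O}, f x ∈ Amap x.1) ∧
      ∀ x : {x : X // x ∈ K \ O},
        dpOp O K Amap Q u x.1 = ∫ y, K.indicator u y ∂(Q x.1 (f x))) := by
  set w : X × A → ℝ := fun p => ∫ y, K.indicator u y ∂(Q p.1 p.2)
  have hg : ∀ y, K.indicator u y ∈ Icc 0 1 := fun y => by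
    by_cases hy : y ∈ K <;> simp [hy, hu0, hu1]
  have hw : ContinuousOn w (admissiblePairs (K \ O) Amap) :=
    hQfeller _ (humeas.indicator hmK) ⟨1, fun y => abs_le.2 ⟨by linarith [(hg y).1], (hg y).2⟩⟩
  have hattain : ∀ x ∈ K \ O, ∃ a ∈ Amap x, w (x, a) = valueFun Amap w x := fun x hx =>
    exists_mem_eq_valueFun hw hx (hAcp x hx) (hAne x hx)
  have hv : ∀ x ∈ K \ O, valueFun Amap w x ∈ Icc 0 1 := fun x hx => by
    obtain ⟨a, ha, hav⟩ := hattain x hx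
    have := hQprob x hx a ha
    exact hav ▸ integral_mem_Icc_zero_one hg
  obtain ⟨f, hfm, hf⟩ := exists_measurable_argmax hAwm hw hAcp hAne
  refine ⟨?_, fun x => (dpOp_mem_Icc hv x).1, fun x => (dpOp_mem_Icc hv x).2,
    fun x hx => dpOp_apply_of_notMem_of_notMem (fun hxO => hx (hOK.subset hxO)) hx, hattain,
    f, hfm, fun x => (hf x).1, fun x => (dpOp_apply_of_mem_diff x.2).trans (hf x).2.symm⟩
  rw [dpOp_eq]
  exact (measurable_one.indicator hmO).add
    ((measurable_valueFun hAwm hw hAcp hAne).indicator_of_subtype (hmK.diff hmO))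

theorem stmt1 {X A : Type*}
    [TopologicalSpace X] [PolishSpace X] [MeasurableSpace X] [BorelSpace X]
    [TopologicalSpace A] [PolishSpace A] [MeasurableSpace A] [BorelSpace A]
    (O K : Set X) (hOne : O.Nonempty) (hKne : K.Nonempty)
    (hmO : MeasurableSet O) (hmK : MeasurableSet K) (hOK : O ⊂ K)
    (Amap : X → Set A)
    (hAne : ∀ x ∈ K \ O, (Amap x).Nonempty)
    (hAcp : ∀ x ∈ K \ O, IsCompact (Amap x))
    -- upper hemicontinuity of `x ↦ A(x)` on `K ∖ O`
    (hAuh : ∀ x ∈ K \ O, ∀ U : Set A, IsOpen U → Amap x ⊆ U →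
      ∃ V : Set X, IsOpen V ∧ x ∈ V ∧ ∀ z ∈ (K \ O) ∩ V, Amap z ⊆ U)
    -- weak measurability of `x ↦ A(x)` on `K ∖ O`
    (hAwm : ∀ G : Set A, IsOpen G → MeasurableSet {x | x ∈ K \ O ∧ (Amap x ∩ G).Nonempty})
    (Q : X → A → Measure X)
    (hQprob : ∀ x ∈ K \ O, ∀ a ∈ Amap x, IsProbabilityMeasure (Q x a))
    (hQmeas : ∀ B : Set X, MeasurableSet B →
      Measurable fun p : {p : X × A // p.1 ∈ K \ O ∧ p.2 ∈ Amap p.1} => Q p.1.1 p.1.2 B)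
    -- strong Feller property of `Q` on `𝕂`
    (hQfeller : ∀ g : X → ℝ, Measurable g → (∃ C, ∀ y, |g y| ≤ C) →
      ContinuousOn (fun p : X × A => ∫ y, g y ∂(Q p.1 p.2))
        {p : X × A | p.1 ∈ K \ O ∧ p.2 ∈ Amap p.1})
    (u : X → ℝ) (humeas : Measurable u) (hu0 : ∀ x, 0 ≤ u x) (hu1 : ∀ x, u x ≤ 1)
    (huK : ∀ x ∉ K, u x = 0) :
    Measurable (dpOp O K Amap Q u) ∧
    (∀ x, 0 ≤ dpOp O K Amap Q u x) ∧ (∀ x, dpOp O K Amap Q u x ≤ 1) ∧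
    (∀ x ∉ K, dpOp O K Amap Q u x = 0) ∧
    (∀ x ∈ K \ O, ∃ a ∈ Amap x,
      (∫ y, K.indicator u y ∂(Q x a)) =
        sSup ((fun a => ∫ y, K.indicator u y ∂(Q x a)) '' Amap x)) ∧
    (∃ f : {x : X // x ∈ K \ O} → A, Measurable f ∧
      (∀ x : {x : X // x ∈ K \ O}, f x ∈ Amap x.1) ∧
      ∀ x : {x : X // x ∈ K \ O},
        dpOp O K Amap Q u x.1 = ∫ y, K.indicator u y ∂(Q x.1 (f x))) :=
  stmt1_general O K hmO hmK hOK Amap hAne hAcp hAwm Q hQprob hQfeller u humeas hu0 hu1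
end

section
/- Suppose τ ∧ τ' < ∞ holds P_x-almost surely for every x ∈ X. If u: X→[0,1] is Borel measurable with u = 0 on X∖K and u(x) ≤ 1_O(x) + 1_{K∖O}(x) · ∫_K u(y) κ(x, dy) for every x ∈ X, then u(x) ≤ h(x) for every x ∈ X. -/
open MeasureTheory ProbabilityTheory Set
open scoped ENNReal

/-- First hitting time of the set `S` by the sequence `ω`, valued in `ℕ∞` (`⊤` if never hit). -/
noncomputable def hitTime {X : Type*} (S : Set X) (ω : ℕ → X) : ℕ∞ :=
  sInf ((fun t : ℕ => (t : ℕ∞)) '' {t : ℕ | ω t ∈ S})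

/-- `P x` is the law on `X^ℕ` of the canonical Markov chain started at `x` with one-step
transition kernel `κ` (the Ionescu–Tulcea measure): each `P x` is a probability measure giving
full measure to paths starting at `x`, and conditionally on the first `n + 1` coordinates the
`(n+1)`-st coordinate has law `κ (ω n)`. -/
def IsMarkovChainLaw {X : Type*} [MeasurableSpace X] (κ : X → Measure X)
    (P : X → Measure (ℕ → X)) : Prop :=
  (∀ x, IsProbabilityMeasure (P x)) ∧
  (∀ x, P x {ω | ω 0 = x} = 1) ∧
  (∀ x (n : ℕ) (E : Set (ℕ → X)),
    MeasurableSet[MeasurableSpace.comap (fun (ω : ℕ → X) (i : Fin (n + 1)) => ω (i : ℕ))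
      inferInstance] E →
    ∀ f : X → ℝ≥0∞, Measurable f →
      ∫⁻ ω in E, f (ω (n + 1)) ∂(P x) = ∫⁻ ω in E, ∫⁻ y, f y ∂(κ (ω n)) ∂(P x))

/-!
Iterating the sub-solution inequality along the chain gives, for every `n`,
`u x ≤ P_x(x enters O by time n, staying in K \ O before) + E_x[u(x_n); x_0, …, x_n ∈ K \ O]`,
the Markov property turning `∫ u(y) κ(x_n, dy)` into `u(x_{n+1})` at each step. Since `u ≤ 1`,
the last term is at most the probability of staying in `K \ O` up to time `n`, which tends to `0`
because the chain a.s. leaves `K \ O`, while the first term increases to `h(x)`.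
-/

section

variable {X : Type*}

section HitTime

variable {S : Set X} {ω : ℕ → X} {t : ℕ}

theorem coe_lt_hitTime_iff : (t : ℕ∞) < hitTime S ω ↔ ∀ s ≤ t, ω s ∉ S := by
  refine ⟨fun h s hs hmem => (h.trans_le (sInf_le ⟨s, hmem, rfl⟩)).not_ge (Nat.cast_le.2 hs),
    fun h => (ENat.natCast_lt_natCast.2 t.lt_succ_self).trans_le (le_sInf ?_)⟩
  rintro _ ⟨s, hs, rfl⟩
  exact Nat.cast_le.2 (not_le.1 fun hst => h s hst hs)

theorem hitTime_le_coe_iff : hitTime S ω ≤ t ↔ ∃ s ≤ t, ω s ∈ S := by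
  simpa using coe_lt_hitTime_iff.not

theorem hitTime_lt_top_iff : hitTime S ω < ⊤ ↔ ∃ t, ω t ∈ S := by
  refine ⟨fun h => ?_, fun ⟨t, ht⟩ => (hitTime_le_coe_iff.2 ⟨t, le_rfl, ht⟩).trans_lt
    (ENat.natCast_lt_top t)⟩
  obtain ⟨t, ht⟩ := ENat.ne_top_iff_exists.1 h.ne
  obtain ⟨s, -, hs⟩ := hitTime_le_coe_iff.1 ht.ge
  exact ⟨s, hs⟩

end HitTime

def reachBy (O S : Set X) (n : ℕ) : Set (ℕ → X) :=
  {ω | ∃ t ≤ n, ω t ∈ O ∧ ∀ s < t, ω s ∈ S}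

def stayIn (S : Set X) (n : ℕ) : Set (ℕ → X) :=
  {ω | ∀ s ≤ n, ω s ∈ S}

section Paths

variable {O S : Set X}

theorem monotone_reachBy : Monotone (reachBy O S) :=
  fun _ _ hmn _ ⟨t, ht, h⟩ => ⟨t, ht.trans hmn, h⟩

theorem antitone_stayIn : Antitone (stayIn (X := X) S) :=
  fun _ _ hmn _ h s hs => h s (hs.trans hmn)

theorem stayIn_zero : stayIn S 0 = {ω | ω 0 ∈ S} := by
  simp [stayIn]

theorem stayIn_succ (n : ℕ) : stayIn S (n + 1) = stayIn S n ∩ {ω | ω (n + 1) ∈ S} := by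
  ext ω
  simp only [stayIn, mem_ofPred_eq, mem_inter_iff, Nat.le_succ_iff_eq_or_le, or_imp, forall_and,
    forall_eq, and_comm]

theorem disjoint_reachBy_stayIn (hOS : Disjoint O S) (n : ℕ) :
    Disjoint (reachBy O S n) (stayIn S n) :=
  disjoint_left.2 fun _ ⟨t, htn, htO, _⟩ hstay => hOS.notMem_of_mem_left htO (hstay t htn)

theorem reachBy_union_subset (n : ℕ) :
    reachBy O S n ∪ (stayIn S n ∩ {ω | ω (n + 1) ∈ O}) ⊆ reachBy O S (n + 1) := by
  rintro ω (⟨t, htn, ht⟩ | ⟨hstay, hO⟩)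
  · exact ⟨t, htn.trans n.le_succ, ht⟩
  · exact ⟨n + 1, le_rfl, hO, fun s hs => hstay s (Nat.lt_succ_iff.1 hs)⟩

variable [MeasurableSpace X]

theorem measurableSet_comap_stayIn (hS : MeasurableSet S) (n : ℕ) :
    MeasurableSet[MeasurableSpace.comap (fun (ω : ℕ → X) (i : Fin (n + 1)) => ω (i : ℕ))
      inferInstance] (stayIn S n) := by
  refine ⟨univ.pi fun _ => S, MeasurableSet.univ_pi fun _ => hS, ?_⟩
  ext ω
  simp [stayIn, Fin.forall_iff]

theorem measurableSet_stayIn (hS : MeasurableSet S) (n : ℕ) : MeasurableSet (stayIn S n) :=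
  (measurable_pi_lambda (fun (ω : ℕ → X) (i : Fin (n + 1)) => ω i) fun _ =>
    measurable_pi_apply _).comap_le _
    (measurableSet_comap_stayIn hS n)

end Paths

theorem iUnion_reachBy_sdiff {O K : Set X} (hOK : O ⊆ K) :
    ⋃ n, reachBy O (K \ O) n = {ω | hitTime O ω < hitTime Kᶜ ω ∧ hitTime O ω < ⊤} := by
  ext ω
  simp only [reachBy, mem_iUnion, mem_ofPred_eq]
  constructor
  · rintro ⟨-, t, -, htO, hbefore⟩
    have hle : hitTime O ω ≤ t := hitTime_le_coe_iff.2 ⟨t, le_rfl, htO⟩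
    refine ⟨hle.trans_lt (coe_lt_hitTime_iff.2 fun s hs => ?_),
      hle.trans_lt (ENat.natCast_lt_top t)⟩
    rcases hs.lt_or_eq with hs | rfl
    exacts [not_not.2 (hbefore s hs).1, not_not.2 (hOK htO)]
  · rintro ⟨hlt, htop⟩
    obtain ⟨t, ht⟩ := ENat.ne_top_iff_exists.1 htop.ne
    obtain ⟨s, hst, hsO⟩ := hitTime_le_coe_iff.1 ht.ge
    refine ⟨s, s, le_rfl, hsO, fun r hr => ⟨?_, ?_⟩⟩
    · exact not_not.1 (coe_lt_hitTime_iff.1 (ht ▸ hlt) r (hr.le.trans hst))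
    · refine coe_lt_hitTime_iff.1 ?_ r le_rfl
      rw [← ht]
      exact_mod_cast hr.trans_le hst

theorem iInter_stayIn_sdiff (O K : Set X) :
    ⋂ n, stayIn (K \ O) n = {ω | min (hitTime O ω) (hitTime Kᶜ ω) < ⊤}ᶜ := by
  ext ω
  simp only [stayIn, mem_iInter, mem_compl_iff, mem_ofPred_eq, min_lt_iff, hitTime_lt_top_iff,
    mem_sdiff]
  constructor
  · rintro h (⟨t, ht⟩ | ⟨t, ht⟩)
    exacts [(h t t le_rfl).2 ht, ht (h t t le_rfl).1]
  · intro h _ s _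
    push Not at h
    exact ⟨h.2 s, h.1 s⟩

variable [MeasurableSpace X]

theorem setLIntegral_le_measure_add_setLIntegral {μ : Measure (ℕ → X)} {O S : Set X}
    (hO : MeasurableSet O) (hS : MeasurableSet S) {u : X → ℝ≥0∞} (hu1 : ∀ z, u z ≤ 1)
    (hu0 : ∀ z ∉ O ∪ S, u z = 0) (E : Set (ℕ → X)) (k : ℕ) :
    ∫⁻ ω in E, u (ω k) ∂μ ≤
      μ (E ∩ {ω | ω k ∈ O}) + ∫⁻ ω in E ∩ {ω | ω k ∈ S}, u (ω k) ∂μ := by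
  have hOk : MeasurableSet {ω : ℕ → X | ω k ∈ O} := measurable_pi_apply k hO
  have hSk : MeasurableSet {ω : ℕ → X | ω k ∈ S} := measurable_pi_apply k hS
  have hsplit : ∀ z, u z ≤ O.indicator 1 z + S.indicator u z := by
    intro z
    by_cases hzO : z ∈ O
    · simpa [hzO] using (hu1 z).trans le_self_add
    by_cases hzS : z ∈ S
    · simp [hzO, hzS]
    · simp [hu0 z (by simp [hzO, hzS])]
  calc ∫⁻ ω in E, u (ω k) ∂μ
      ≤ ∫⁻ ω in E, ({ω | ω k ∈ O}.indicator 1 ω +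
          {ω | ω k ∈ S}.indicator (u ∘ (· k)) ω) ∂μ :=
        lintegral_mono fun ω => (hsplit (ω k)).trans_eq rfl
    _ = μ (E ∩ {ω | ω k ∈ O}) + ∫⁻ ω in E ∩ {ω | ω k ∈ S}, u (ω k) ∂μ := by
        rw [lintegral_add_left (measurable_one.indicator hOk), lintegral_indicator_one hOk,
          Measure.restrict_apply hOk, lintegral_indicator hSk, Measure.restrict_restrict hSk,
          inter_comm _ E, inter_comm _ E]
        rfl

namespace IsMarkovChainLaw

variable {κ : X → Measure X} {P : X → Measure (ℕ → X)}

theorem le_lintegral_comp_eval_zero (hP : IsMarkovChainLaw κ P) {f : X → ℝ≥0∞}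
    (hf : Measurable f) (x : X) : f x ≤ ∫⁻ ω, f (ω 0) ∂P x :=
  calc f x = f x * P x {ω | ω 0 = x} := by rw [hP.2.1 x, mul_one]
    _ ≤ f x * P x {ω | f x ≤ f (ω 0)} := by
        gcongr with ω
        intro hω
        rw [hω]
    _ ≤ ∫⁻ ω, f (ω 0) ∂P x := mul_meas_ge_le_lintegral (hf.comp (measurable_pi_apply 0)) _

variable {O S : Set X} {u : X → ℝ≥0∞}

theorem le_measure_reachBy_add_setLIntegral (hP : IsMarkovChainLaw κ P) (hO : MeasurableSet O)
    (hS : MeasurableSet S) (hOS : Disjoint O S) (hu : Measurable u) (hu1 : ∀ z, u z ≤ 1)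
    (hu0 : ∀ z ∉ O ∪ S, u z = 0) (huS : ∀ z ∈ S, u z ≤ ∫⁻ y, u y ∂κ z) (x : X) :
    ∀ n, u x ≤ P x (reachBy O S n) + ∫⁻ ω in stayIn S n, u (ω n) ∂P x
  | 0 =>
    calc u x ≤ ∫⁻ ω in univ, u (ω 0) ∂P x := by
          rw [setLIntegral_univ]; exact hP.le_lintegral_comp_eval_zero hu x
      _ ≤ P x (univ ∩ {ω | ω 0 ∈ O}) +
            ∫⁻ ω in univ ∩ {ω | ω 0 ∈ S}, u (ω 0) ∂P x :=
          setLIntegral_le_measure_add_setLIntegral hO hS hu1 hu0 univ 0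
      _ ≤ P x (reachBy O S 0) + ∫⁻ ω in stayIn S 0, u (ω 0) ∂P x := by
          rw [univ_inter, univ_inter, stayIn_zero]
          gcongr
          exact fun ω hω => ⟨0, le_rfl, hω, fun s hs => absurd hs s.not_lt_zero⟩
  | n + 1 =>
    calc u x ≤ P x (reachBy O S n) + ∫⁻ ω in stayIn S n, u (ω n) ∂P x :=
          hP.le_measure_reachBy_add_setLIntegral hO hS hOS hu hu1 hu0 huS x n
      _ ≤ P x (reachBy O S n) + ∫⁻ ω in stayIn S n, ∫⁻ y, u y ∂κ (ω n) ∂P x := by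
          gcongr _ + ?_
          exact setLIntegral_mono' (measurableSet_stayIn hS n) fun ω hω => huS _ (hω n le_rfl)
      _ = P x (reachBy O S n) + ∫⁻ ω in stayIn S n, u (ω (n + 1)) ∂P x := by
          rw [hP.2.2 x n _ (measurableSet_comap_stayIn hS n) u hu]
      _ ≤ P x (reachBy O S n) + (P x (stayIn S n ∩ {ω | ω (n + 1) ∈ O}) +
            ∫⁻ ω in stayIn S (n + 1), u (ω (n + 1)) ∂P x) := by
          rw [stayIn_succ]
          gcongr
          exact setLIntegral_le_measure_add_setLIntegral hO hS hu1 hu0 _ _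
      _ ≤ P x (reachBy O S (n + 1)) + ∫⁻ ω in stayIn S (n + 1), u (ω (n + 1)) ∂P x := by
          have hmeas : MeasurableSet (stayIn S n ∩ {ω | ω (n + 1) ∈ O}) :=
            (measurableSet_stayIn hS n).inter (measurable_pi_apply (n + 1) hO)
          rw [← add_assoc, ← measure_union
            ((disjoint_reachBy_stayIn hOS n).mono_right inter_subset_left) hmeas]
          gcongr
          exact reachBy_union_subset n

theorem le_measure_iUnion_reachBy (hP : IsMarkovChainLaw κ P) (hO : MeasurableSet O)
    (hS : MeasurableSet S) (hOS : Disjoint O S) (hu : Measurable u) (hu1 : ∀ z, u z ≤ 1)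
    (hu0 : ∀ z ∉ O ∪ S, u z = 0) (huS : ∀ z ∈ S, u z ≤ ∫⁻ y, u y ∂κ z) {x : X}
    (hnull : P x (⋂ n, stayIn S n) = 0) : u x ≤ P x (⋃ n, reachBy O S n) := by
  have := hP.1 x
  have hbound : ∀ n, u x ≤ P x (reachBy O S n) + P x (stayIn S n) := fun n =>
    (hP.le_measure_reachBy_add_setLIntegral hO hS hOS hu hu1 hu0 huS x n).trans <| by
      gcongr
      exact (lintegral_mono fun ω : ℕ → X => hu1 (ω n)).trans_eq (setLIntegral_one _)
  have hlim := (tendsto_measure_iUnion_atTop (μ := P x) (monotone_reachBy (O := O) (S := S))).add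
    (tendsto_measure_iInter_atTop (μ := P x)
      (fun n => (measurableSet_stayIn hS n).nullMeasurableSet) antitone_stayIn
      ⟨0, measure_ne_top _ _⟩)
  have hle := ge_of_tendsto' hlim hbound
  rwa [hnull, add_zero] at hle

end IsMarkovChainLaw

end

theorem stmt3_general {X : Type*} [MeasurableSpace X]
    (κ : Kernel X X)
    (O K : Set X) (hmO : MeasurableSet O) (hmK : MeasurableSet K) (hOK : O ⊂ K)
    (P : X → Measure (ℕ → X)) (hP : IsMarkovChainLaw (fun x => κ x) P)
    (hfin : ∀ x, P x {ω | min (hitTime O ω) (hitTime Kᶜ ω) < ⊤} = 1)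
    (u : X → ℝ≥0∞) (humeas : Measurable u) (hu1 : ∀ x, u x ≤ 1)
    (huK : ∀ x ∉ K, u x = 0)
    (husub : ∀ x, u x ≤ O.indicator (1 : X → ℝ≥0∞) x +
      (K \ O).indicator (fun x' => ∫⁻ y in K, u y ∂(κ x')) x) :
    ∀ x, u x ≤ P x {ω | hitTime O ω < hitTime Kᶜ ω ∧ hitTime O ω < ⊤} := by
  intro x
  have := hP.1 x
  have hu0 : ∀ z ∉ O ∪ K \ O, u z = 0 := by rwa [union_sdiff_cancel hOK.subset]
  have huS : ∀ z ∈ K \ O, u z ≤ ∫⁻ y, u y ∂κ z := fun z hz =>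
    calc u z ≤ ∫⁻ y in K, u y ∂κ z := by
          simpa [indicator_of_notMem hz.2, indicator_of_mem hz] using husub z
      _ ≤ ∫⁻ y, u y ∂κ z := setLIntegral_le_lintegral _ _
  have hstay : MeasurableSet (⋂ n, stayIn (K \ O) n) :=
    .iInter fun n => measurableSet_stayIn (hmK.diff hmO) n
  have hnull : P x (⋂ n, stayIn (K \ O) n) = 0 := by
    rw [iInter_stayIn_sdiff] at hstay ⊢
    exact (prob_compl_eq_zero_iff hstay.of_compl).2 (hfin x)
  rw [← iUnion_reachBy_sdiff hOK.subset]
  exact hP.le_measure_iUnion_reachBy hmO (hmK.diff hmO) disjoint_sdiff_right humeas hu1 hu0 huS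
    hnull

theorem stmt3 {X : Type*} [MeasurableSpace X] [StandardBorelSpace X]
    (κ : Kernel X X) [IsMarkovKernel κ]
    (O K : Set X) (hmO : MeasurableSet O) (hmK : MeasurableSet K) (hOK : O ⊂ K)
    (P : X → Measure (ℕ → X)) (hP : IsMarkovChainLaw (fun x => κ x) P)
    (hfin : ∀ x, P x {ω | min (hitTime O ω) (hitTime Kᶜ ω) < ⊤} = 1)
    (u : X → ℝ≥0∞) (humeas : Measurable u) (hu1 : ∀ x, u x ≤ 1)
    (huK : ∀ x ∉ K, u x = 0)
    (husub : ∀ x, u x ≤ O.indicator (1 : X → ℝ≥0∞) x +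
      (K \ O).indicator (fun x' => ∫⁻ y in K, u y ∂(κ x')) x) :
    ∀ x, u x ≤ P x {ω | hitTime O ω < hitTime Kᶜ ω ∧ hitTime O ω < ⊤} :=
  stmt3_general κ O K hmO hmK hOK P hP hfin u humeas hu1 huK husub
end

section
/- E[Σ_{t=0}^{τ̃∧σ} Y_t] = E[Σ_{t=0}^{σ} α^t Y_t], where on the left the (almost surely finite) sum runs over 0 ≤ t ≤ min(τ̃, σ) and on the right the sum runs over 0 ≤ t ≤ σ (an infinite series when σ = ∞, which converges since 0 ≤ Y_t ≤ 1 and 0 < α < 1). -/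
open MeasureTheory ProbabilityTheory Set Finset

/-!
Put `g t := 1{t ≤ σ} Y t`. The left integrand is `∑' t, 1{t ≤ τ} g t` and the right one is
`∑' t, α ^ t g t`. Since `g t` is `G`-measurable and `{t ≤ τ}` is independent of `G` with
probability `α ^ t` (the geometric tail), both series have the same termwise expectations
`α ^ t E[g t]`; as `0 ≤ g t ≤ 1`, these are summable, so expectation and summation commute.
-/

theorem sum_range_toNat_min_add_one_eq_tsum {M : Type*} [AddCommMonoid M] [TopologicalSpace M]
    (n : ℕ) (s : ℕ∞) (f : ℕ → M) :
    ∑ t ∈ range ((min (n : ℕ∞) s).toNat + 1), f t =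
      ∑' t, if t ≤ n ∧ (t : ℕ∞) ≤ s then f t else 0 := by
  have hmem : ∀ t, t ∈ range ((min (n : ℕ∞) s).toNat + 1) ↔ t ≤ n ∧ (t : ℕ∞) ≤ s := fun t => by
    rw [Finset.mem_range, Nat.lt_succ_iff, ← ENat.natCast_le_natCast,
      ENat.natCast_toNat (min_lt_of_left_lt (ENat.natCast_lt_top n)).ne, le_min_iff, Nat.cast_le]
  rw [tsum_eq_sum fun t ht => if_neg ((hmem t).not.mp ht)]
  exact sum_congr rfl fun t ht => (if_pos ((hmem t).mp ht)).symm

theorem measureReal_setOf_le_eq_pow {Ω : Type*} {mΩ : MeasurableSpace Ω} {P : Measure Ω}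
    {α : ℝ} (hα0 : 0 ≤ α) (hα1 : α < 1) {τ : Ω → ℕ} (hτ : Measurable τ)
    (hτdist : ∀ n : ℕ, P {ω | τ ω = n} = ENNReal.ofReal ((1 - α) * α ^ n)) (t : ℕ) :
    P.real {ω | t ≤ τ ω} = α ^ t := by
  have hunion : {ω | t ≤ τ ω} = ⋃ k : ℕ, {ω | τ ω = t + k} := by
    ext ω
    simp only [mem_ofPred_eq, mem_iUnion]
    exact le_iff_exists_add
  have hdisj : Pairwise (Function.onFun Disjoint fun k : ℕ => {ω | τ ω = t + k}) :=
    fun i j hij => disjoint_left.mpr fun ω hi hj => hij (by simp_all)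
  have hgeom : HasSum (fun k : ℕ => (1 - α) * α ^ (t + k)) (α ^ t) := by
    have h := (hasSum_geometric_of_lt_one hα0 hα1).mul_left ((1 - α) * α ^ t)
    rw [show (1 - α) * α ^ t * (1 - α)⁻¹ = α ^ t by field_simp [(sub_pos.mpr hα1).ne']] at h
    simpa only [pow_add, mul_assoc] using h
  rw [measureReal_def, hunion, measure_iUnion hdisj fun k => hτ (measurableSet_singleton _)]
  simp_rw [hτdist]
  rw [← ENNReal.ofReal_tsum_of_nonneg
    (fun k => mul_nonneg (sub_nonneg.mpr hα1.le) (pow_nonneg hα0 _))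
    hgeom.summable, hgeom.tsum_eq, ENNReal.toReal_ofReal (pow_nonneg hα0 t)]

theorem ProbabilityTheory.Indep.integral_indicator_eq_mul {Ω : Type*}
    {m₁ m₂ mΩ : MeasurableSpace Ω} {P : Measure Ω} (hm₁ : m₁ ≤ mΩ) (hm₂ : m₂ ≤ mΩ)
    (h : Indep m₁ m₂ P) {s : Set Ω} (hs : MeasurableSet[m₁] s) {f : Ω → ℝ}
    (hf : Measurable[m₂] f) :
    ∫ ω, s.indicator f ω ∂P = P.real s * ∫ ω, f ω ∂P := by
  have hind : s.indicator (1 : Ω → ℝ) ⟂ᵢ[P] f :=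
    Indep.indicator_indepFun 1 hs (indep_of_indep_of_le_right h hf.comap_le)
  rw [← integral_indicator_one (hm₁ s hs), ← hind.integral_fun_mul_eq_mul_integral
    ((measurable_const.indicator (hm₁ s hs)).aestronglyMeasurable)
    (hf.mono hm₂ le_rfl).aestronglyMeasurable]
  congr with ω
  by_cases hω : ω ∈ s <;> simp [hω]

theorem integral_tsum_of_nonneg {α ι : Type*} [Countable ι] {mα : MeasurableSpace α}
    {μ : Measure α} {F : ι → α → ℝ} (hint : ∀ i, Integrable (F i) μ) (hnn : ∀ i a, 0 ≤ F i a)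
    (hsum : Summable fun i => ∫ a, F i a ∂μ) :
    ∫ a, ∑' i, F i a ∂μ = ∑' i, ∫ a, F i a ∂μ :=
  (integral_tsum_of_summable_integral_norm hint
    (by simpa only [Real.norm_of_nonneg (hnn _ _)] using hsum)).symm

theorem stmt17 {Ω : Type*} [m0 : MeasurableSpace Ω] (P : Measure Ω) [IsProbabilityMeasure P]
    (α : ℝ) (hα0 : 0 < α) (hα1 : α < 1)
    (τ : Ω → ℕ) (hτmeas : Measurable τ)
    (hτdist : ∀ n : ℕ, P {ω | τ ω = n} = ENNReal.ofReal ((1 - α) * α ^ n))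
    (G : MeasurableSpace Ω) (hG : G ≤ m0)
    (hindep : Indep G (MeasurableSpace.comap τ inferInstance) P)
    (Y : ℕ → Ω → ℝ) (hYmeas : ∀ t, Measurable[G] (Y t))
    (hY0 : ∀ t ω, 0 ≤ Y t ω) (hY1 : ∀ t ω, Y t ω ≤ 1)
    (σ : Ω → ℕ∞) (hσmeas : Measurable[G] σ) :
    ∫ ω, (∑ t ∈ Finset.range ((min ((τ ω : ℕ∞)) (σ ω)).toNat + 1), Y t ω) ∂P =
      ∫ ω, (∑' t : ℕ, if (t : ℕ∞) ≤ σ ω then α ^ t * Y t ω else 0) ∂P := by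
  set g : ℕ → Ω → ℝ := fun t ω => if (t : ℕ∞) ≤ σ ω then Y t ω else 0 with hg
  have hgG : ∀ t, Measurable[G] (g t) := fun t =>
    Measurable.ite (hσmeas (MeasurableSet.of_discrete (s := Ici (t : ℕ∞)))) (hYmeas t)
      measurable_const
  have hg0 : ∀ t ω, 0 ≤ g t ω := fun t ω => by simp only [hg]; split_ifs <;> simp [hY0]
  have hg1 : ∀ t ω, g t ω ≤ 1 := fun t ω => by simp only [hg]; split_ifs <;> simp [hY1]
  have hg_int : ∀ t, Integrable (g t) P := fun t =>
    .of_bound (hgG t |>.mono hG le_rfl).aestronglyMeasurable 1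
      (ae_of_all _ fun ω => (Real.norm_of_nonneg (hg0 t ω)).trans_le (hg1 t ω))
  have hB : ∀ t : ℕ, MeasurableSet[MeasurableSpace.comap τ inferInstance] {ω | t ≤ τ ω} :=
    fun t => ⟨{n | t ≤ n}, trivial, rfl⟩
  have hterm : ∀ t, ∫ ω, {ω | t ≤ τ ω}.indicator (g t) ω ∂P = ∫ ω, α ^ t * g t ω ∂P := by
    intro t
    rw [hindep.symm.integral_indicator_eq_mul hτmeas.comap_le hG (hB t) (hgG t),
      measureReal_setOf_le_eq_pow hα0.le hα1 hτmeas hτdist, integral_const_mul]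
  have hsum : Summable fun t => ∫ ω, α ^ t * g t ω ∂P := by
    refine (summable_geometric_of_lt_one hα0.le hα1).of_nonneg_of_le
      (fun t => integral_nonneg fun ω => mul_nonneg (pow_nonneg hα0.le t) (hg0 t ω)) fun t => ?_
    rw [integral_const_mul]
    exact mul_le_of_le_one_right (pow_nonneg hα0.le t) <|
      (integral_mono (hg_int t) (integrable_const 1) (hg1 t)).trans (by simp)
  calc ∫ ω, (∑ t ∈ Finset.range ((min ((τ ω : ℕ∞)) (σ ω)).toNat + 1), Y t ω) ∂P
      = ∫ ω, ∑' t, {ω | t ≤ τ ω}.indicator (g t) ω ∂P := by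
        simp_rw [sum_range_toNat_min_add_one_eq_tsum, ite_and, indicator_apply, mem_ofPred_eq, hg]
    _ = ∑' t, ∫ ω, {ω | t ≤ τ ω}.indicator (g t) ω ∂P :=
        integral_tsum_of_nonneg (fun t => (hg_int t).indicator (hτmeas.comap_le _ (hB t)))
          (fun t => indicator_nonneg fun ω _ => hg0 t ω) (by simpa only [hterm] using hsum)
    _ = ∑' t, ∫ ω, α ^ t * g t ω ∂P := tsum_congr hterm
    _ = ∫ ω, ∑' t, α ^ t * g t ω ∂P :=
        (integral_tsum_of_nonneg (fun t => (hg_int t).const_mul _)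
          (fun t ω => mul_nonneg (pow_nonneg hα0.le t) (hg0 t ω)) hsum).symm
    _ = ∫ ω, (∑' t : ℕ, if (t : ℕ∞) ≤ σ ω then α ^ t * Y t ω else 0) ∂P := by
        simp_rw [hg, mul_ite, mul_zero]
end
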